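/- Fix d ∈ (−1,1) and β > 0. There exists a constant C ≥ 0 such that η(z₁,z₂) ≤ C·μ(z₁,z₂) for all (z₁,z₂) ∈ ℝ². In particular, the ratio g(z) = η(z)/μ(z) is bounded above on the set where μ ≠ 0. -/
import Mathlib


/-- Sign-preserving power `⌊x⌉^p = sign(x)·|x|^p`. -/
noncomputable def spow (x p : ℝ) : ℝ := Real.sign x * |x| ^ p

/-- `μ(z) = |⌊z₁⌉^{1/(1-d)} - z₂|²`. -/
noncomputable def muF (d z1 z2 : ℝ) : ℝ := |spow z1 (1/(1-d)) - z2| ^ (2:ℝ)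

/-- `η(z) = (1+β)(z₁ - ⌊z₂⌉^{1-d})⌊z₁⌉^{(1+d)/(1-d)} - β|z₁|^{2/(1-d)}`. -/
noncomputable def etaF (d β z1 z2 : ℝ) : ℝ :=
  (1 + β) * (z1 - spow z2 (1 - d)) * spow z1 ((1+d)/(1-d)) - β * |z1| ^ (2/(1-d))

lemma rpow_two_eq_sq (x : ℝ) (hx : 0 ≤ x) : x ^ (2:ℝ) = x ^ 2 := by
  rw [show (2:ℝ) = ((2:ℕ):ℝ) by norm_num, Real.rpow_natCast]

lemma spow_zero' (p : ℝ) : spow 0 p = 0 := by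
  simp [spow, Real.sign_zero]

lemma spow_of_pos {x : ℝ} (hx : 0 < x) (p : ℝ) : spow x p = x ^ p := by
  rw [spow, Real.sign_of_pos hx, abs_of_pos hx, one_mul]

lemma spow_of_neg {x : ℝ} (hx : x < 0) (p : ℝ) : spow x p = -((-x) ^ p) := by
  rw [spow, Real.sign_of_neg hx, abs_of_neg hx]; ring

lemma abs_spow (x : ℝ) {p : ℝ} (hp : p ≠ 0) : |spow x p| = |x| ^ p := by
  rcases lt_trichotomy x 0 with h | h | h
  · rw [spow_of_neg h, abs_neg, abs_of_nonneg (Real.rpow_nonneg (by linarith) p),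
      abs_of_neg h]
  · subst h; simp [spow_zero', Real.zero_rpow hp]
  · rw [spow_of_pos h, abs_of_nonneg (Real.rpow_nonneg h.le p), abs_of_pos h]

lemma spow_one (x : ℝ) : spow x 1 = x := by
  rcases lt_trichotomy x 0 with h | h | h
  · rw [spow_of_neg h, Real.rpow_one]; ring
  · subst h; exact spow_zero' 1
  · rw [spow_of_pos h, Real.rpow_one]

lemma spow_spow (x : ℝ) {p : ℝ} (hp : 0 < p) (q : ℝ) :
    spow (spow x p) q = spow x (p * q) := by
  rcases lt_trichotomy x 0 with h | h | h
  · have hxp : 0 < (-x) ^ p := Real.rpow_pos_of_pos (by linarith) p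
    rw [spow_of_neg h, spow_of_neg (by linarith : -((-x)^p) < 0), neg_neg,
      ← Real.rpow_mul (by linarith : (0:ℝ) ≤ -x), spow_of_neg h]
  · subst h; rw [spow_zero', spow_zero', spow_zero']
  · have hxp : 0 < x ^ p := Real.rpow_pos_of_pos h p
    rw [spow_of_pos h, spow_of_pos hxp, ← Real.rpow_mul h.le, spow_of_pos h]

lemma spow_self_mul {a : ℝ} {p q : ℝ} (hpq : p + q = 2) (ha : a ≠ 0) :
    spow a p * spow a q = a ^ 2 := by
  have habs : (0:ℝ) < |a| := abs_pos.mpr ha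
  have hs : Real.sign a * Real.sign a = 1 := by
    rcases Real.sign_apply_eq_of_ne_zero a ha with h | h <;> rw [h] <;> norm_num
  calc spow a p * spow a q
      = (Real.sign a * Real.sign a) * (|a| ^ p * |a| ^ q) := by rw [spow, spow]; ring
    _ = |a| ^ (p + q) := by rw [hs, one_mul, ← Real.rpow_add habs]
    _ = a ^ 2 := by rw [hpq, rpow_two_eq_sq _ (abs_nonneg a), sq_abs]

/-- For positive reals, the cross term `B^(1-d) * A^(1+d)` is at most `A² + B²`. -/
lemma prod_le {d : ℝ} (hd1 : -1 < d) (hd2 : d < 1) {A B : ℝ} (hA : 0 < A) (hB : 0 < B) :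
    B ^ (1-d) * A ^ (1+d) ≤ A ^ 2 + B ^ 2 := by
  have h1 : (0:ℝ) ≤ 1 - d := by linarith
  have h2 : (0:ℝ) ≤ 1 + d := by linarith
  rcases le_total A B with h | h
  · have e1 : A ^ (1+d) ≤ B ^ (1+d) := Real.rpow_le_rpow hA.le h h2
    have e2 : B ^ (1-d) * B ^ (1+d) = B ^ 2 := by
      rw [← Real.rpow_add hB]; norm_num [rpow_two_eq_sq _ hB.le]
    have e3 : (0:ℝ) < B ^ (1-d) := Real.rpow_pos_of_pos hB _
    nlinarith [sq_nonneg A]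
  · have e1 : B ^ (1-d) ≤ A ^ (1-d) := Real.rpow_le_rpow hB.le h h1
    have e2 : A ^ (1-d) * A ^ (1+d) = A ^ 2 := by
      rw [← Real.rpow_add hA]; norm_num [rpow_two_eq_sq _ hA.le]
    have e3 : (0:ℝ) < A ^ (1+d) := Real.rpow_pos_of_pos hA _
    nlinarith [sq_nonneg B]

/-- Core inequality for positive `a`, `b`. -/
lemma core_pos {d β : ℝ} (hd1 : -1 < d) (hd2 : d < 1) (hβ : 0 < β)
    {a b : ℝ} (ha : 0 < a) (hb : 0 < b) :
    a ^ 2 - (1+β) * (b ^ (1-d) * a ^ (1+d)) ≤ (2 + 1/β) * (a-b) ^ 2 := by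
  have h1 : (0:ℝ) ≤ 1 - d := by linarith
  have h2 : (0:ℝ) ≤ 1 + d := by linarith
  have hβ' : (0:ℝ) < 1/β := by positivity
  rcases le_total a b with h | h
  · -- b ≥ a: cross term ≥ a², LHS ≤ -β a² ≤ 0
    have e1 : a ^ (1-d) ≤ b ^ (1-d) := Real.rpow_le_rpow ha.le h h1
    have e2 : a ^ (1-d) * a ^ (1+d) = a ^ 2 := by
      rw [← Real.rpow_add ha]; norm_num [rpow_two_eq_sq _ ha.le]
    have e3 : (0:ℝ) < a ^ (1+d) := Real.rpow_pos_of_pos ha _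
    have key : a ^ 2 ≤ b ^ (1-d) * a ^ (1+d) := by nlinarith
    nlinarith [sq_nonneg (a-b), sq_nonneg a]
  · -- a ≥ b: cross term ≥ b², then quadratic inequality
    have e1 : b ^ (1+d) ≤ a ^ (1+d) := Real.rpow_le_rpow hb.le h h2
    have e2 : b ^ (1-d) * b ^ (1+d) = b ^ 2 := by
      rw [← Real.rpow_add hb]; norm_num [rpow_two_eq_sq _ hb.le]
    have e3 : (0:ℝ) < b ^ (1-d) := Real.rpow_pos_of_pos hb _
    have key : b ^ 2 ≤ b ^ (1-d) * a ^ (1+d) := by nlinarith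
    have quad : β * (a ^ 2 - (1+β) * b ^ 2) ≤ (2*β+1) * (a-b) ^ 2 := by
      nlinarith [sq_nonneg ((β+1)*a - (2*β+1)*b), mul_nonneg (mul_nonneg hβ.le (mul_nonneg hβ.le hβ.le)) (sq_nonneg b)]
    have step1 : a ^ 2 - (1+β) * (b ^ (1-d) * a ^ (1+d)) ≤ a ^ 2 - (1+β) * b ^ 2 := by
      nlinarith
    have step2 : a ^ 2 - (1+β) * b ^ 2 ≤ (2 + 1/β) * (a-b) ^ 2 := by
      rw [show (2 + 1/β) * (a-b)^2 = (2*β+1)*(a-b)^2/β by field_simp,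
        le_div_iff₀ hβ]
      nlinarith [quad]
    linarith

/-- The core pointwise inequality after the substitution `a = spow z1 (1/(1-d))`. -/
lemma core {d β : ℝ} (hd1 : -1 < d) (hd2 : d < 1) (hβ : 0 < β) (a b : ℝ) :
    a ^ 2 - (1+β) * (spow b (1-d) * spow a (1+d)) ≤ (4 + β + 1/β) * (a-b) ^ 2 := by
  have h1 : (0:ℝ) < 1 - d := by linarith
  have h2 : (0:ℝ) < 1 + d := by linarith
  have hβ' : (0:ℝ) < 1/β := by positivity
  rcases lt_trichotomy a 0 with haneg | ha0 | hapos
  · rcases lt_trichotomy b 0 with hbneg | hb0 | hbpos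
    · -- both negative: reduce to core_pos for (-a, -b)
      have := core_pos hd1 hd2 hβ (neg_pos.mpr haneg) (neg_pos.mpr hbneg)
      rw [spow_of_neg haneg, spow_of_neg hbneg]
      nlinarith [sq_nonneg (a-b)]
    · subst hb0
      rw [spow_zero']
      have : (0:ℝ) ≤ (4 + β + 1/β) * (a-0)^2 - a^2 := by nlinarith [sq_nonneg a]
      nlinarith
    · -- a < 0 < b: opposite signs
      rw [spow_of_neg haneg, spow_of_pos hbpos]
      have hp := prod_le hd1 hd2 (neg_pos.mpr haneg) hbpos
      nlinarith [mul_pos hbpos (neg_pos.mpr haneg), sq_nonneg (a+b)]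
  · subst ha0
    rw [spow_zero']
    nlinarith [sq_nonneg b]
  · rcases lt_trichotomy b 0 with hbneg | hb0 | hbpos
    · -- b < 0 < a: opposite signs
      rw [spow_of_pos hapos, spow_of_neg hbneg]
      have hp := prod_le hd1 hd2 hapos (neg_pos.mpr hbneg)
      nlinarith [mul_pos hapos (neg_pos.mpr hbneg), sq_nonneg (a+b)]
    · subst hb0
      rw [spow_zero']
      have : (0:ℝ) ≤ (4 + β + 1/β) * (a-0)^2 - a^2 := by nlinarith [sq_nonneg a]
      nlinarith
    · have := core_pos hd1 hd2 hβ hapos hbpos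
      rw [spow_of_pos hapos, spow_of_pos hbpos]
      nlinarith [sq_nonneg (a-b)]

/-- There is `C ≥ 0` with `η ≤ C·μ` everywhere; in particular the ratio `η/μ` is
bounded above where `μ ≠ 0`. -/
theorem stmt8 (d β : ℝ) (hd : d ∈ Set.Ioo (-1:ℝ) 1) (hβ : 0 < β) :
    ∃ C : ℝ, 0 ≤ C ∧
      (∀ z1 z2 : ℝ, etaF d β z1 z2 ≤ C * muF d z1 z2) ∧
      (∀ z1 z2 : ℝ, muF d z1 z2 ≠ 0 → etaF d β z1 z2 / muF d z1 z2 ≤ C) := by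
  obtain ⟨hd1, hd2⟩ := hd
  have h1 : (0:ℝ) < 1 - d := by linarith
  have h2 : (0:ℝ) < 1 + d := by linarith
  have hp : (0:ℝ) < 1/(1-d) := by positivity
  have main : ∀ z1 z2 : ℝ, etaF d β z1 z2 ≤ (4 + β + 1/β) * muF d z1 z2 := by
    intro z1 z2
    set a := spow z1 (1/(1-d)) with ha_def
    have hmu : muF d z1 z2 = (a - z2) ^ 2 := by
      rw [muF, rpow_two_eq_sq _ (abs_nonneg _), sq_abs]
    have hz1 : spow a (1-d) = z1 := by
      rw [ha_def, spow_spow _ hp, one_div, inv_mul_cancel₀ h1.ne', spow_one]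
    have hpow : spow z1 ((1+d)/(1-d)) = spow a (1+d) := by
      rw [ha_def, spow_spow _ hp, show 1/(1-d) * (1+d) = (1+d)/(1-d) by ring]
    have habs : |z1| ^ (2/(1-d)) = a ^ 2 := by
      have : |a| = |z1| ^ (1/(1-d)) := abs_spow z1 hp.ne'
      rw [← sq_abs, this, ← rpow_two_eq_sq _ (Real.rpow_nonneg (abs_nonneg z1) _),
        ← Real.rpow_mul (abs_nonneg z1)]
      congr 1
      ring
    have heta : etaF d β z1 z2 = a ^ 2 - (1+β) * (spow z2 (1-d) * spow a (1+d)) := by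
      rcases eq_or_ne a 0 with h0 | h0
      · have hz10 : z1 = 0 := by rw [← hz1, h0, spow_zero']
        have h20 : (2/(1-d)) ≠ 0 := by positivity
        rw [etaF, hz10, h0]
        simp [spow_zero', Real.zero_rpow h20]
      · have hmul : spow a (1-d) * spow a (1+d) = a ^ 2 :=
          spow_self_mul (by ring) h0
        rw [etaF, hpow, habs, ← hz1]
        ring_nf
        nlinarith [hmul]
    rw [heta, hmu]
    exact core hd1 hd2 hβ a z2
  refine ⟨4 + β + 1/β, by positivity, main, ?_⟩
  intro z1 z2 hne
  have hnn : 0 ≤ muF d z1 z2 := Real.rpow_nonneg (abs_nonneg _) _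
  have hpos : 0 < muF d z1 z2 := lt_of_le_of_ne hnn (Ne.symm hne)
  rw [div_le_iff₀ hpos]
  exact main z1 z2
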